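/- Let 𝒞 : ℝ^d → ℝ^d satisfy ‖𝒞(x)/r − x‖_p ≤ C(1−δ) for all x with ‖x‖_p ≤ C, where p ≥ 1, r > 0, C > 0, δ ∈ (0,1]. Fix ω ∈ (0, 1/r] and s > 0. If u, v ∈ ℝ^d satisfy ‖u − v‖_p ≤ C s, and we set v' = v + ω s 𝒞((u − v)/s), then ‖u − v'‖_p² ≤ (1 − ωr(2δ − δ²)) C² s². -/
import Mathlib

/-- The ℓ_p norm on ℝ^d. -/
noncomputable def pNorm {d : ℕ} (p : ℝ) (x : Fin d → ℝ) : ℝ :=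
  (∑ i, |x i| ^ p) ^ (1 / p)

lemma pNorm_nonneg {d : ℕ} (p : ℝ) (x : Fin d → ℝ) : 0 ≤ pNorm p x := by
  apply Real.rpow_nonneg
  exact Finset.sum_nonneg fun i _ => Real.rpow_nonneg (abs_nonneg _) _

lemma pNorm_smul {d : ℕ} {p : ℝ} (hp : 1 ≤ p) (c : ℝ) (x : Fin d → ℝ) :
    pNorm p (c • x) = |c| * pNorm p x := by
  have hp0 : p ≠ 0 := by linarith
  unfold pNorm
  have : ∀ i, |(c • x) i| ^ p = |c| ^ p * |x i| ^ p := by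
    intro i
    simp only [Pi.smul_apply, smul_eq_mul, abs_mul]
    exact Real.mul_rpow (abs_nonneg _) (abs_nonneg _)
  simp_rw [this, ← Finset.mul_sum]
  rw [Real.mul_rpow (Real.rpow_nonneg (abs_nonneg c) p)
    (Finset.sum_nonneg fun i _ => Real.rpow_nonneg (abs_nonneg _) _),
    ← Real.rpow_mul (abs_nonneg c), mul_one_div_cancel hp0, Real.rpow_one]

lemma pNorm_add_le {d : ℕ} {p : ℝ} (hp : 1 ≤ p) (x y : Fin d → ℝ) :
    pNorm p (x + y) ≤ pNorm p x + pNorm p y := by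
  unfold pNorm
  simpa using Real.Lp_add_le Finset.univ x y hp

/-- One-step contraction of the compression error for locally-bounded compressors. -/
theorem stmt_4 {d : ℕ} (p r C δ w s : ℝ) (hp : 1 ≤ p) (hr : 0 < r) (hC : 0 < C)
    (hδ : 0 < δ) (hδ1 : δ ≤ 1) (hw : 0 < w) (hwr : w ≤ 1 / r) (hs : 0 < s)
    (𝒞 : (Fin d → ℝ) → (Fin d → ℝ))
    (h𝒞 : ∀ x, pNorm p x ≤ C → pNorm p (r⁻¹ • 𝒞 x - x) ≤ C * (1 - δ))
    (u v : Fin d → ℝ) (huv : pNorm p (u - v) ≤ C * s)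
    (v' : Fin d → ℝ) (hv' : v' = v + (w * s) • 𝒞 (s⁻¹ • (u - v))) :
    (pNorm p (u - v')) ^ 2 ≤ (1 - w * r * (2 * δ - δ ^ 2)) * C ^ 2 * s ^ 2 := by
  set x : Fin d → ℝ := s⁻¹ • (u - v) with hxdef
  have hs0 : s ≠ 0 := ne_of_gt hs
  have hx : pNorm p x ≤ C := by
    rw [hxdef, pNorm_smul hp, abs_of_pos (inv_pos.2 hs)]
    rw [inv_mul_le_iff₀ hs, mul_comm]
    exact huv
  have ha := h𝒞 x hx
  have hwr1 : w * r ≤ 1 := by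
    rw [le_div_iff₀ hr] at hwr; linarith
  have hdecomp : u - v' = s • ((w * r) • (x - r⁻¹ • 𝒞 x) + (1 - w * r) • x) := by
    rw [hv', hxdef]
    funext i
    simp only [Pi.add_apply, Pi.sub_apply, Pi.smul_apply, smul_eq_mul]
    field_simp
    ring
  have hneg : pNorm p (x - r⁻¹ • 𝒞 x) = pNorm p (r⁻¹ • 𝒞 x - x) := by
    have : x - r⁻¹ • 𝒞 x = (-1 : ℝ) • (r⁻¹ • 𝒞 x - x) := by
      funext i; simp
    rw [this, pNorm_smul hp]; simp
  have key : pNorm p (u - v') ≤ s * ((w * r) * (C * (1 - δ)) + (1 - w * r) * C) := by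
    rw [hdecomp, pNorm_smul hp, abs_of_pos hs]
    apply mul_le_mul_of_nonneg_left _ (le_of_lt hs)
    calc pNorm p ((w * r) • (x - r⁻¹ • 𝒞 x) + (1 - w * r) • x)
        ≤ pNorm p ((w * r) • (x - r⁻¹ • 𝒞 x)) + pNorm p ((1 - w * r) • x) :=
          pNorm_add_le hp _ _
      _ = (w * r) * pNorm p (x - r⁻¹ • 𝒞 x) + (1 - w * r) * pNorm p x := by
          rw [pNorm_smul hp, pNorm_smul hp, abs_of_pos (mul_pos hw hr),
            abs_of_nonneg (by linarith)]
      _ ≤ (w * r) * (C * (1 - δ)) + (1 - w * r) * C := by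
          rw [hneg]
          exact add_le_add (mul_le_mul_of_nonneg_left ha (by positivity))
            (mul_le_mul_of_nonneg_left hx (by linarith))
  have hN := pNorm_nonneg p (u - v')
  have hK2 : pNorm p (u - v') ^ 2 ≤ (s * ((w * r) * (C * (1 - δ)) + (1 - w * r) * C)) ^ 2 :=
    pow_le_pow_left₀ hN key 2
  nlinarith [mul_nonneg (mul_nonneg (sq_nonneg (s * C))
    (mul_nonneg (mul_pos hw hr).le (sq_nonneg δ))) (sub_nonneg.2 hwr1)]
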